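/- Grounding a variable cannot break stickiness: if Σ is a set of TGDs and Σ' is obtained by replacing, in some rules, certain body variables by constants, then every variable occurrence marked in Σ' (by the marking procedure) corresponds to an occurrence marked in Σ; consequently, if in Σ every marked variable occurring more than once in a rule body is among the replaced (grounded) variables, then Σ' is sticky. -/

import Mathlib

inductive Term where
  | const : ℕ → Term
  | null : ℕ → Term
  | var : ℕ → Term
deriving DecidableEq

structure Atom where
  pred : ℕ
  args : List Term
deriving DecidableEq

structure Rule where
  body : List Atom
  head : Atom
deriving DecidableEq

/-- Term `t` occurs in the body of `σ` in the `i`-th body atom at argument `j`. -/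
def occAt (σ : Rule) (i j : ℕ) (t : Term) : Prop :=
  ∃ a, σ.body[i]? = some a ∧ a.args[j]? = some t

/-- The `i`-th body atom of `σ` has predicate `p`. -/
def occPred (σ : Rule) (i p : ℕ) : Prop :=
  ∃ a, σ.body[i]? = some a ∧ a.pred = p

/-- Variable `v` appears in the head of `σ`. -/
def headHasVar (σ : Rule) (v : ℕ) : Prop :=
  ∃ j : ℕ, σ.head.args[j]? = some (Term.var v)

/-- The marking procedure: `Marked S σ i j` says that the body occurrence at
body atom `i`, argument `j` of rule `σ` is marked w.r.t. the set of rules `S`.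
Preliminary step: mark body occurrences of variables not appearing in the
head. Propagation step: if a marked variable occurs in some body at position
`π = (p, j)`, mark every body occurrence, in any rule of `S`, of a variable
appearing in that rule's head at position `π`. -/
inductive Marked (S : Set Rule) : Rule → ℕ → ℕ → Prop
  | prelim {σ i j v} : σ ∈ S → occAt σ i j (Term.var v) → ¬ headHasVar σ v →
      Marked S σ i j
  | prop {σ i j p σ' v i' j'} : Marked S σ i j → occPred σ i p → σ' ∈ S →
      σ'.head.pred = p → σ'.head.args[j]? = some (Term.var v) →
      occAt σ' i' j' (Term.var v) → Marked S σ' i' j'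

/-- `S` is sticky: no rule of `S` has a marked variable occurring more than
once in its body. -/
def Sticky (S : Set Rule) : Prop :=
  ∀ σ ∈ S, ∀ i j v i' j', Marked S σ i j → occAt σ i j (Term.var v) →
    occAt σ i' j' (Term.var v) → (i, j) = (i', j')

/-- Apply a (per-rule) substitution sending variables to terms. -/
def applyT (s : ℕ → Term) : Term → Term
  | Term.var v => s v
  | t => t

def applyAtom (s : ℕ → Term) (a : Atom) : Atom := ⟨a.pred, a.args.map (applyT s)⟩

def applyRule (s : ℕ → Term) (σ : Rule) : Rule :=
  ⟨σ.body.map (applyAtom s), applyAtom s σ.head⟩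

def IsGrounding (s : ℕ → Term) : Prop :=
  ∀ v, s v = Term.var v ∨ ∃ c, s v = Term.const c

def groundRules (S : Set Rule) (θ : Rule → ℕ → Term) : Set Rule :=
  {σ' | ∃ σ ∈ S, σ' = applyRule (θ σ) σ}

section Grounding

variable {s : ℕ → Term}

theorem applyT_eq_var_iff (hs : IsGrounding s) {t : Term} {v : ℕ} :
    applyT s t = Term.var v ↔ t = Term.var v ∧ s v = Term.var v := by
  constructor
  · intro h
    cases t with
    | const c => cases h
    | null n => cases h
    | var w =>
      rcases hs w with hw | ⟨c, hw⟩ <;> rw [applyT, hw] at h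
      · cases h
        exact ⟨rfl, hw⟩
      · cases h
  · rintro ⟨rfl, hv⟩
    exact hv

theorem getElem?_map_applyT_eq_var_iff (hs : IsGrounding s) {l : List Term} {j v : ℕ} :
    (l.map (applyT s))[j]? = some (Term.var v) ↔
      l[j]? = some (Term.var v) ∧ s v = Term.var v := by
  rw [List.getElem?_map]
  cases l[j]? with
  | none => simp
  | some t => simp [applyT_eq_var_iff hs]

theorem occAt_applyRule_var (hs : IsGrounding s) {σ : Rule} {i j v : ℕ}
    (h : occAt (applyRule s σ) i j (Term.var v)) :
    occAt σ i j (Term.var v) ∧ s v = Term.var v := by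
  obtain ⟨a', ha', hj⟩ := h
  simp only [applyRule, List.getElem?_map, Option.map_eq_some_iff] at ha'
  obtain ⟨a, ha, rfl⟩ := ha'
  obtain ⟨hj, hv⟩ := (getElem?_map_applyT_eq_var_iff hs).1 hj
  exact ⟨⟨a, ha, hj⟩, hv⟩

theorem headHasVar_applyRule_iff (hs : IsGrounding s) {σ : Rule} {v : ℕ} :
    headHasVar (applyRule s σ) v ↔ headHasVar σ v ∧ s v = Term.var v := by
  simp only [headHasVar, applyRule, applyAtom, getElem?_map_applyT_eq_var_iff hs,
    exists_and_right]

theorem occPred_applyRule_iff {σ : Rule} {i p : ℕ} :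
    occPred (applyRule s σ) i p ↔ occPred σ i p := by
  simp [occPred, applyRule, applyAtom]

end Grounding

theorem Marked.mem {S : Set Rule} {σ : Rule} {i j : ℕ} (h : Marked S σ i j) : σ ∈ S := by
  induction h with
  | prelim hσ _ _ => exact hσ
  | prop _ _ hσ _ _ _ _ => exact hσ

/-- The same substitution grounds body and head, so a variable that survives in the body of the
grounded rule is in its head iff it was in the head before: each marking step of `Σ'` is one
of `Σ`. -/
theorem Marked.of_groundRules {S : Set Rule} {θ : Rule → ℕ → Term}
    (hθ : ∀ σ, IsGrounding (θ σ)) {τ : Rule} {i j : ℕ} (h : Marked (groundRules S θ) τ i j) :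
    ∀ σ ∈ S, τ = applyRule (θ σ) σ → Marked S σ i j := by
  induction h with
  | prelim _ hocc hhead =>
    rintro σ hσ rfl
    obtain ⟨hocc, hv⟩ := occAt_applyRule_var (hθ σ) hocc
    exact .prelim hσ hocc fun h => hhead ((headHasVar_applyRule_iff (hθ σ)).2 ⟨h, hv⟩)
  | prop hm hpred _ hpredHead hhead hocc ih =>
    rintro σ hσ rfl
    obtain ⟨ρ, hρ, rfl⟩ := hm.mem
    exact .prop (ih ρ hρ rfl) (occPred_applyRule_iff.1 hpred) hσ hpredHead
      ((getElem?_map_applyT_eq_var_iff (hθ σ)).1 hhead).1 (occAt_applyRule_var (hθ σ) hocc).1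

theorem sticky_groundRules {S : Set Rule} {θ : Rule → ℕ → Term}
    (hθ : ∀ σ, IsGrounding (θ σ))
    (hrep : ∀ σ ∈ S, ∀ v i j i' j', Marked S σ i j → occAt σ i j (Term.var v) →
      occAt σ i' j' (Term.var v) → (i, j) ≠ (i', j') → ∃ c, θ σ v = Term.const c) :
    Sticky (groundRules S θ) := by
  rintro _ ⟨σ, hσ, rfl⟩ i j v i' j' hm hocc hocc'
  obtain ⟨hocc, hv⟩ := occAt_applyRule_var (hθ σ) hocc
  by_contra hne
  obtain ⟨c, hc⟩ := hrep σ hσ v i j i' j' (hm.of_groundRules hθ σ hσ rfl) hocc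
    (occAt_applyRule_var (hθ σ) hocc').1 hne
  rw [hc] at hv
  cases hv

/-- Grounding variables cannot break stickiness. Let `Σ'` be obtained from `Σ`
by replacing, in each rule `σ`, certain body variables by constants (the
substitution `θ σ` maps each variable either to itself or to a constant).
Then: (1) every occurrence marked in `Σ'` corresponds to an occurrence marked
in `Σ`; (2) consequently, if in `Σ` every marked variable occurring more than
once in a rule body is among the replaced (grounded) variables, then `Σ'` is
sticky. -/
theorem grounding_preserves_stickiness
    (S0 : Set Rule) (θ : Rule → ℕ → Term)
    (hθ : ∀ σ v, θ σ v = Term.var v ∨ ∃ c, θ σ v = Term.const c) :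
    let S' : Set Rule := {σ' | ∃ σ ∈ S0, σ' = applyRule (θ σ) σ}
    (∀ σ ∈ S0, ∀ i j, Marked S' (applyRule (θ σ) σ) i j → Marked S0 σ i j) ∧
    ((∀ σ ∈ S0, ∀ v i j i' j', Marked S0 σ i j → occAt σ i j (Term.var v) →
        occAt σ i' j' (Term.var v) → (i, j) ≠ (i', j') →
        ∃ c, θ σ v = Term.const c) →
      Sticky S') :=
  ⟨fun σ hσ _ _ hm => Marked.of_groundRules hθ hm σ hσ rfl, sticky_groundRules hθ⟩
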